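/- arXiv:2006.05666 — 5 statements merged into one kernel-verified Lean document; each statement's English description precedes it below -/
import Mathlib

section
/- If (d̄, ā) is a regular pair of positive integer tuples, then the product of all the a_i divides the product of all the d_j. -/
/-- A pair `(d, a)` of tuples of positive integers is *regular* if for any collection of
indices of `a` whose weights have a nontrivial greatest common divisor, there is an
equinumerous collection of indices of `d` such that the gcd of the chosen weights divides
the gcd of the chosen degrees. -/
def IsRegularPair {k N : ℕ} (d : Fin k → ℕ) (a : Fin (N + 1) → ℕ) : Prop :=
  ∀ S : Finset (Fin (N + 1)), 1 < S.gcd a →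
    ∃ T : Finset (Fin k), T.card = S.card ∧ S.gcd a ∣ T.gcd d

private lemma count_filter_eq (p : ℕ) (hp : p.Prime) (n : ℕ) (hn : n ≠ 0) (M : ℕ)
    (hM : n.factorization p ≤ M) :
    ((Finset.Icc 1 M).filter (fun e => p ^ e ∣ n)).card = n.factorization p := by
  have h : (Finset.Icc 1 M).filter (fun e => p ^ e ∣ n) = Finset.Icc 1 (n.factorization p) := by
    ext e
    simp only [Finset.mem_filter, Finset.mem_Icc, hp.pow_dvd_iff_le_factorization hn]
    omega
  rw [h, Nat.card_Icc]; omega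

private lemma count_filter_le (p : ℕ) (hp : p.Prime) (n : ℕ) (hn : n ≠ 0) (M : ℕ) :
    ((Finset.Icc 1 M).filter (fun e => p ^ e ∣ n)).card ≤ n.factorization p := by
  calc ((Finset.Icc 1 M).filter (fun e => p ^ e ∣ n)).card
      ≤ (Finset.Icc 1 (n.factorization p)).card := by
        apply Finset.card_le_card
        intro e he
        simp only [Finset.mem_filter, Finset.mem_Icc,
          hp.pow_dvd_iff_le_factorization hn] at he ⊢
        omega
    _ = n.factorization p := by rw [Nat.card_Icc]; omega

/-- If `(d̄, ā)` is a regular pair of positive integer tuples, then `∏ aᵢ ∣ ∏ dⱼ`. -/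
theorem prod_weights_dvd_prod_degrees {k N : ℕ} (d : Fin k → ℕ) (a : Fin (N + 1) → ℕ)
    (hd : ∀ j, 0 < d j) (ha : ∀ i, 0 < a i) (hreg : IsRegularPair d a) :
    (∏ i, a i) ∣ ∏ j, d j := by
  have hA : (∏ i, a i) ≠ 0 := (Finset.prod_pos (fun i _ => ha i)).ne'
  have hD : (∏ j, d j) ≠ 0 := (Finset.prod_pos (fun j _ => hd j)).ne'
  rw [← Nat.factorization_le_iff_dvd hA hD]
  intro p
  by_cases hp : p.Prime
  · rw [Nat.factorization_prod (fun i _ => (ha i).ne'),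
      Nat.factorization_prod (fun j _ => (hd j).ne')]
    simp only [Finset.sum_apply']
    set M := ∑ i, (a i).factorization p with hMdef
    -- pointwise cardinality inequality from regularity
    have step : ∀ e : ℕ, 1 ≤ e →
        (Finset.univ.filter (fun i => p ^ e ∣ a i)).card ≤
        (Finset.univ.filter (fun j => p ^ e ∣ d j)).card := by
      intro e he
      set S := Finset.univ.filter (fun i => p ^ e ∣ a i) with hS
      rcases S.eq_empty_or_nonempty with h | h
      · simp [h]
      · have hdvd : p ^ e ∣ S.gcd a :=
          Finset.dvd_gcd (fun i hi => (Finset.mem_filter.mp hi).2)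
        have hgcd0 : S.gcd a ≠ 0 := by
          rw [Ne, Finset.gcd_eq_zero_iff]
          obtain ⟨i, hi⟩ := h
          exact fun hall => (ha i).ne' (hall i hi)
        have h1 : 1 < S.gcd a := by
          have hpe : 2 ≤ p ^ e := by
            calc 2 ≤ p := hp.two_le
            _ ≤ p ^ e := Nat.le_self_pow (by omega) p
          have := Nat.le_of_dvd (Nat.pos_of_ne_zero hgcd0) hdvd
          omega
        obtain ⟨T, hTcard, hTdvd⟩ := hreg S h1
        have hsub : T ⊆ Finset.univ.filter (fun j => p ^ e ∣ d j) := by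
          intro j hj
          simp only [Finset.mem_filter, Finset.mem_univ, true_and]
          exact hdvd.trans (hTdvd.trans (Finset.gcd_dvd hj))
        calc S.card = T.card := hTcard.symm
          _ ≤ _ := Finset.card_le_card hsub
    calc ∑ i, (a i).factorization p
        = ∑ i, ((Finset.Icc 1 M).filter (fun e => p ^ e ∣ a i)).card := by
          refine Finset.sum_congr rfl fun i _ => ?_
          exact (count_filter_eq p hp (a i) (ha i).ne' M
            (Finset.single_le_sum (f := fun i => (a i).factorization p)
              (fun i _ => Nat.zero_le _) (Finset.mem_univ i))).symm
      _ = ∑ e ∈ Finset.Icc 1 M, (Finset.univ.filter (fun i => p ^ e ∣ a i)).card := by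
          simp only [Finset.card_filter]
          rw [Finset.sum_comm]
      _ ≤ ∑ e ∈ Finset.Icc 1 M, (Finset.univ.filter (fun j => p ^ e ∣ d j)).card := by
          refine Finset.sum_le_sum fun e he => ?_
          exact step e (Finset.mem_Icc.mp he).1
      _ = ∑ j, ((Finset.Icc 1 M).filter (fun e => p ^ e ∣ d j)).card := by
          simp only [Finset.card_filter]
          rw [Finset.sum_comm]
      _ ≤ ∑ j, (d j).factorization p :=
          Finset.sum_le_sum fun j _ => count_filter_le p hp (d j) (hd j).ne' M
  · simp [Nat.factorization_eq_zero_of_not_prime _ hp]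
end

section
/- Let a_0 ≤ ... ≤ a_N and d_1 ≤ ... ≤ d_k be positive integers with a_N = 2 and all d_j ≥ 3, such that the number of even d_j is at least the number of a_i equal to 2, and Σ a_i − Σ d_j ≥ 1. Then (N + 1 − 3k − (Σ a_i − Σ d_j)) ≥ 0, i.e. the variance is at least the codimension. -/
/-- Let `a₀ ≤ … ≤ a_N` and `d₁ ≤ … ≤ d_k` be positive integers with `a_N = 2`, all
`dⱼ ≥ 3`, the number of even `dⱼ` at least the number of `aᵢ` equal to `2`, and index
`∑ aᵢ - ∑ dⱼ ≥ 1`.  Then `N + 1 - 3k - (∑ aᵢ - ∑ dⱼ) ≥ 0`, i.e. the variance is at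
least the codimension. -/
theorem variance_ge_codim_of_top_weight_two (N k : ℕ)
    (a : Fin (N + 1) → ℕ) (d : Fin k → ℕ)
    (hapos : ∀ i, 0 < a i)
    (hamono : Monotone a) (hdmono : Monotone d)
    (haN : a (Fin.last N) = 2)
    (hd3 : ∀ j, 3 ≤ d j)
    (heven : (Finset.univ.filter fun i => a i = 2).card ≤
      (Finset.univ.filter fun j => 2 ∣ d j).card)
    (hindex : 1 ≤ (∑ i, (a i : ℤ)) - ∑ j, (d j : ℤ)) :
    0 ≤ (N : ℤ) + 1 - 3 * k - ((∑ i, (a i : ℤ)) - ∑ j, (d j : ℤ)) := by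
  have ha2 : ∀ i, a i ≤ 2 := fun i => haN ▸ hamono (Fin.le_last i)
  have hsum_a : ∑ i, a i =
      (N + 1) + (Finset.univ.filter fun i => a i = 2).card := by
    rw [Finset.card_filter]
    have : ∀ i ∈ Finset.univ, a i = 1 + (if a i = 2 then 1 else 0) := by
      intro i _
      have h1 := hapos i; have h2 := ha2 i
      split <;> omega
    rw [Finset.sum_congr rfl this, Finset.sum_add_distrib]
    simp
  have hsum_d : 3 * k + (Finset.univ.filter fun j => 2 ∣ d j).card ≤ ∑ j, d j := by
    rw [Finset.card_filter]
    have h : ∀ j ∈ Finset.univ, (3 + if 2 ∣ d j then 1 else 0) ≤ d j := by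
      intro j _
      have h1 := hd3 j
      split
      · next h => rcases h with ⟨c, hc⟩; omega
      · omega
    have := Finset.sum_le_sum h
    rw [Finset.sum_add_distrib] at this
    simpa [mul_comm] using this
  have h1 : (∑ i, (a i : ℤ)) =
      (N + 1 : ℤ) + ((Finset.univ.filter fun i => a i = 2).card : ℤ) := by
    have := congrArg (Nat.cast : ℕ → ℤ) hsum_a
    push_cast at this ⊢
    linarith
  have h2 : 3 * (k : ℤ) + ((Finset.univ.filter fun j => 2 ∣ d j).card : ℤ) ≤
      ∑ j, (d j : ℤ) := by
    have := (Nat.cast_le (α := ℤ)).mpr hsum_d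
    push_cast at this ⊢
    linarith
  have h3 : ((Finset.univ.filter fun i => a i = 2).card : ℤ) ≤
      ((Finset.univ.filter fun j => 2 ∣ d j).card : ℤ) := by exact_mod_cast heven
  linarith
end

section
/- Let a_0 ≤ ... ≤ a_N and d_1 ≤ ... ≤ d_k be positive integers with a_N > 1, d_j > a_{n+j} for j < k and d_k ≥ 2 a_N where n = N − k, a_n = 1, and Σ a_i − Σ d_j = 1. Writing d_k = a_N + a_n + 1 + β_k with β_k ≥ 0 and β_k ≤ V − 1 where V = Σ_{i=k+1}^{n−1} a_i + 1 (the variance), one has a_N ≤ V + 1 and d_k ≤ 2(V + 1). -/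
/-- Arithmetic bound on weights and degrees in terms of the variance for index-one Fano
weighted complete intersections with `dim |O_X(1)| ≥ dim X`.  Here `n = N - k`,
`a_n = 1`, `dⱼ > a_{n+j}` for `j < k` (1-based), `d_k ≥ 2 a_N`, the index
`∑ aᵢ - ∑ dⱼ = 1`, and `V = ∑_{i=k+1}^{n-1} aᵢ + 1` is the variance.  Writing
`d_k = a_N + a_n + 1 + β_k` with `0 ≤ β_k ≤ V - 1`, one has `a_N ≤ V + 1` and
`d_k ≤ 2 (V + 1)`. -/
theorem weight_degree_bounds_by_variance (N k : ℕ) (hk : 1 ≤ k) (hkN : k < N)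
    (a : Fin (N + 1) → ℕ) (d : Fin k → ℕ)
    (hamono : Monotone a) (hdmono : Monotone d)
    (hapos : ∀ i, 0 < a i)
    (haN : 1 < a (Fin.last N))
    (han : a ⟨N - k, by omega⟩ = 1)
    (hdj : ∀ j : ℕ, (hj : 1 ≤ j) → (hjk : j ≤ k - 1) →
      a ⟨N - k + j, by omega⟩ < d ⟨j - 1, by omega⟩)
    (hdk : 2 * a (Fin.last N) ≤ d ⟨k - 1, by omega⟩)
    (hindex : (∑ i, (a i : ℤ)) - ∑ j, (d j : ℤ) = 1)
    (V : ℕ)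
    (hV : V = 1 + ∑ i : Fin (N + 1), if k + 1 ≤ i.1 ∧ i.1 < N - k then a i else 0)
    (βk : ℕ)
    (hβ : d ⟨k - 1, by omega⟩ = a (Fin.last N) + a ⟨N - k, by omega⟩ + 1 + βk)
    (hβV : βk ≤ V - 1) :
    a (Fin.last N) ≤ V + 1 ∧ d ⟨k - 1, by omega⟩ ≤ 2 * (V + 1) := by
  have h1 : (1:ℕ) ≤ V := hV ▸ Nat.le_add_right 1 _
  rw [han] at hβ
  omega
end

section
/- Let (d̄, ā) be a pair of positive integer tuples satisfying: (i) for every prime power q, |{i : q ∣ a_i}| ≤ |{j : q ∣ d_j}|; (ii) ∏ a_i = ∏ d_j; (iii) no d_j equals any a_i. Suppose further that for every prime p and m > 0, each d_j divisible by exactly p^m (in valuation) is expressible as a non-negative integer combination of those a_i with p^m ∣ a_i. Then no d_j is a prime power. -/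
/-- Let `(d̄, ā)` be tuples of positive integers such that (i) for every prime power `q`,
`|{i : q ∣ aᵢ}| ≤ |{j : q ∣ dⱼ}|`; (ii) `∏ aᵢ = ∏ dⱼ`; (iii) no `dⱼ` equals any `aᵢ`;
and (iv) for every prime `p` and `m > 0`, every `dⱼ` with `ν_p(dⱼ) = m` is a
non-negative integer combination of those `aᵢ` with `p^m ∣ aᵢ`.  Then no `dⱼ` is a
prime power. -/
theorem degrees_not_prime_pow {k N : ℕ} (d : Fin k → ℕ) (a : Fin (N + 1) → ℕ)
    (ha : ∀ i, 0 < a i) (hd : ∀ j, 0 < d j)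
    (hcount : ∀ q : ℕ, IsPrimePow q →
      (Finset.univ.filter fun i => q ∣ a i).card ≤
        (Finset.univ.filter fun j => q ∣ d j).card)
    (hprod : (∏ i, a i) = ∏ j, d j)
    (hne : ∀ j i, d j ≠ a i)
    (hcomb : ∀ p m : ℕ, p.Prime → 0 < m → ∀ j, padicValNat p (d j) = m →
      ∃ c : Fin (N + 1) → ℕ,
        d j = ∑ i ∈ Finset.univ.filter (fun i => p ^ m ∣ a i), c i * a i) :
    ∀ j, ¬ IsPrimePow (d j) := by
  intro j hpp
  obtain ⟨p, m, hp, hm, hdj⟩ := hpp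
  have hp' : p.Prime := Nat.prime_iff.mpr hp
  haveI : Fact p.Prime := ⟨hp'⟩
  have hv : padicValNat p (d j) = m := by
    rw [← hdj, padicValNat.prime_pow]
  obtain ⟨c, hc⟩ := hcomb p m hp' hm j hv
  have hdpos : d j ≠ 0 := (hd j).ne'
  rw [hc] at hdpos
  obtain ⟨i, hi, hine⟩ := Finset.exists_ne_zero_of_sum_ne_zero hdpos
  have hdvd : p ^ m ∣ a i := (Finset.mem_filter.mp hi).2
  have h1 : c i * a i ≤ d j := hc ▸ Finset.single_le_sum (f := fun i => c i * a i) (fun _ _ => Nat.zero_le _) hi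
  have h2 : a i ≤ c i * a i :=
    Nat.le_mul_of_pos_left _ (Nat.pos_of_ne_zero fun h => hine (by simp [h]))
  have h3 : p ^ m ≤ a i := Nat.le_of_dvd (ha i) hdvd
  exact hne j i (le_antisymm (hdj ▸ h3) (le_trans h2 h1))
end

section
/- For every r > 0, the weighted complete intersection data with weights (1^{1+r}, 2^r, 3^r) and multidegree (6^r) satisfies: the associated pair is regular, the Fano index Σ a_i − Σ d_j equals 1, the product of weights equals the product of degrees (so anticanonical degree is 1), and the variance coindex − codim equals r. -/
/-- For every `r > 0`, the weighted complete intersection data with weights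
`(1^{r+1}, 2^r, 3^r)` and multidegree `(6^r)` satisfies: the associated pair is regular,
the Fano index `∑ aᵢ - ∑ dⱼ` equals `1`, the product of the weights equals the product
of the degrees (so the anticanonical degree is `1`), and the variance
`coindex - codim = (dim X + 1 - index) - codim` equals `r`. -/
theorem standard_degree_one_family (r : ℕ) (hr : 0 < r) :
    let w : Fin (3 * r + 1) → ℕ := fun i =>
      if i.1 < r + 1 then 1 else if i.1 < 2 * r + 1 then 2 else 3
    let dd : Fin r → ℕ := fun _ => 6
    (∀ S : Finset (Fin (3 * r + 1)), 1 < S.gcd w →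
      ∃ T : Finset (Fin r), T.card = S.card ∧ S.gcd w ∣ T.gcd dd) ∧
    (∑ i, w i) = (∑ j, dd j) + 1 ∧
    (∏ i, w i) = (∏ j, dd j) ∧
    ((3 * r + 1 - 1) - r) + 1 - ((∑ i, w i) - ∑ j, dd j) - r = r := by
  intro w dd
  have hsumd : (∑ j, dd j) = 6 * r := by simp [dd, mul_comm]
  have hsumw : (∑ i, w i) = 6 * r + 1 := by
    have := Fin.sum_univ_eq_sum_range
      (fun n => if n < r + 1 then 1 else if n < 2 * r + 1 then (2:ℕ) else 3) (3*r+1)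
    rw [show (∑ i, w i) = _ from this, Finset.range_eq_Ico,
      ← Finset.sum_Ico_consecutive _ (Nat.zero_le (r+1)) (by omega : r+1 ≤ 3*r+1),
      ← Finset.sum_Ico_consecutive _ (by omega : r+1 ≤ 2*r+1) (by omega : 2*r+1 ≤ 3*r+1),
      Finset.sum_congr rfl (fun x hx => by
        simp only [Finset.mem_Ico] at hx
        simp only [if_pos (by omega : x < r+1)] : ∀ x ∈ Finset.Ico 0 (r+1), _ = 1),
      Finset.sum_congr rfl (fun x hx => by
        simp only [Finset.mem_Ico] at hx
        simp only [if_neg (by omega : ¬ x < r+1), if_pos (by omega : x < 2*r+1)]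
          : ∀ x ∈ Finset.Ico (r+1) (2*r+1), _ = 2),
      Finset.sum_congr rfl (fun x hx => by
        simp only [Finset.mem_Ico] at hx
        simp only [if_neg (by omega : ¬ x < r+1), if_neg (by omega : ¬ x < 2*r+1)]
          : ∀ x ∈ Finset.Ico (2*r+1) (3*r+1), _ = 3)]
    simp [Nat.card_Ico]
    omega
  have hprodd : (∏ j, dd j) = 6 ^ r := by simp [dd]
  have hprodw : (∏ i, w i) = 6 ^ r := by
    have := Fin.prod_univ_eq_prod_range
      (fun n => if n < r + 1 then 1 else if n < 2 * r + 1 then (2:ℕ) else 3) (3*r+1)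
    rw [show (∏ i, w i) = _ from this, Finset.range_eq_Ico,
      ← Finset.prod_Ico_consecutive _ (Nat.zero_le (r+1)) (by omega : r+1 ≤ 3*r+1),
      ← Finset.prod_Ico_consecutive _ (by omega : r+1 ≤ 2*r+1) (by omega : 2*r+1 ≤ 3*r+1),
      Finset.prod_congr rfl (fun x hx => by
        simp only [Finset.mem_Ico] at hx
        simp only [if_pos (by omega : x < r+1)] : ∀ x ∈ Finset.Ico 0 (r+1), _ = 1),
      Finset.prod_congr rfl (fun x hx => by
        simp only [Finset.mem_Ico] at hx
        simp only [if_neg (by omega : ¬ x < r+1), if_pos (by omega : x < 2*r+1)]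
          : ∀ x ∈ Finset.Ico (r+1) (2*r+1), _ = 2),
      Finset.prod_congr rfl (fun x hx => by
        simp only [Finset.mem_Ico] at hx
        simp only [if_neg (by omega : ¬ x < r+1), if_neg (by omega : ¬ x < 2*r+1)]
          : ∀ x ∈ Finset.Ico (2*r+1) (3*r+1), _ = 3)]
    simp [Nat.card_Ico]
    rw [show 2*r-r = r by omega, show 3*r-2*r = r by omega, ← Nat.mul_pow]
  refine ⟨?_, by omega, by omega, by omega⟩
  intro S hS
  set g := S.gcd w with hg
  obtain ⟨i0, hi0⟩ : S.Nonempty := by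
    by_contra h
    rw [Finset.not_nonempty_iff_eq_empty] at h
    simp [h, hg] at hS
  have hdvd : ∀ i ∈ S, g ∣ w i := fun i hi => Finset.gcd_dvd hi
  have hne1 : ∀ i ∈ S, w i ≠ 1 := by
    intro i hi h1
    have := hdvd i hi
    rw [h1, Nat.dvd_one] at this
    omega
  have hw23 : ∀ i ∈ S, w i = 2 ∨ w i = 3 := by
    intro i hi
    have := hne1 i hi
    simp only [w] at this ⊢
    split_ifs <;> simp_all
  have hg6 : g ∣ 6 := by
    rcases hw23 i0 hi0 with h | h <;>
      exact (h ▸ hdvd i0 hi0).trans (by norm_num)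
  have hcard : S.card ≤ r := by
    have h23 : (∀ i ∈ S, w i = 2) ∨ (∀ i ∈ S, w i = 3) := by
      by_contra h
      push_neg at h
      obtain ⟨⟨a, ha, ha2⟩, ⟨b, hb, hb3⟩⟩ := h
      have hwa : w a = 3 := (hw23 a ha).resolve_left ha2
      have hwb : w b = 2 := (hw23 b hb).resolve_right hb3
      have h2 : g ∣ 2 := hwb ▸ hdvd b hb
      have h3 : g ∣ 3 := hwa ▸ hdvd a ha
      have : g ∣ 1 := (Nat.dvd_sub h3 h2)
      rw [Nat.dvd_one] at this
      omega
    have key : ∀ c : ℕ, (∀ i ∈ S, (c ≤ i.1 ∧ i.1 < c + r)) → S.card ≤ r := by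
      intro c hb
      have := Finset.card_le_card_of_injOn
        (fun i : Fin (3*r+1) => (⟨(i.1 - c) % r, Nat.mod_lt _ hr⟩ : Fin r))
        (fun i _ => Finset.mem_univ _)
        (by
          intro a ha b hb' hab
          have h1 := hb a ha
          have h2 := hb b hb'
          simp only [Fin.mk.injEq] at hab
          rw [Nat.mod_eq_of_lt (by omega), Nat.mod_eq_of_lt (by omega)] at hab
          exact Fin.ext (by omega))
      simpa using this
    rcases h23 with h | h
    · refine key (r+1) (fun i hi => ?_)
      have := h i hi
      simp only [w] at this
      split_ifs at this <;> omega
    · refine key (2*r+1) (fun i hi => ?_)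
      have := h i hi
      simp only [w] at this
      split_ifs at this <;> omega
  obtain ⟨T, hT, hTcard⟩ := Finset.exists_subset_card_eq
    (show S.card ≤ (Finset.univ : Finset (Fin r)).card by simpa using hcard)
  refine ⟨T, hTcard, ?_⟩
  have hTne : T.Nonempty := by
    rw [← Finset.card_pos, hTcard, Finset.card_pos]; exact ⟨i0, hi0⟩
  have : T.gcd dd = 6 := by
    obtain ⟨t, ht⟩ := hTne
    exact Nat.dvd_antisymm (Finset.gcd_dvd ht) (Finset.dvd_gcd fun x _ => dvd_refl 6)
  rw [this]; exact hg6
end
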